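/- arXiv:2602.09402 — 2 statements merged into one kernel-verified Lean document; each statement's English description precedes it below -/
import Mathlib

section
/- Let H₃ = {h₁, h₂, h₃} over singleton domain {x} and Y = {1,2,3} with h₁(x) = {2,3}, h₂(x) = {1,3}, h₃(x) = {1,2}. For any (possibly randomized) online learner A in the mistake-unknown agnostic setting and any horizon T, there exists an adversarial sequence (x, y_t, S_t)_{t=1}^T with y_t ∈ S_t for all t such that E[∑_{t=1}^T 1[ŷ_t ∉ S_t]] − min_{h ∈ H₃} ∑_{t=1}^T 1[h(x) ≠ S_t] ≥ T/9. -/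
/-- The history of (instance, label) pairs revealed before round `t` in the
mistake-unknown model: only the single labels `y_s`, `s < t`, are revealed. -/
def histU {T : ℕ} (y : Fin T → Fin 3) (t : Fin T) : List (Unit × Fin 3) :=
  List.ofFn (fun i : Fin t.1 => ((), y ⟨i.1, i.isLt.trans t.isLt⟩))

/-!
The adversary reveals, at every round, the label `y_t` to which the learner currently gives the
least probability, at most `1/3`. For a fixed `j`, answering `S_t = {j}` when `y_t = j` and
`S_t = {j}ᶜ = h_j(x)` otherwise, the regret against `h_j` in round `t` is `-p_t(j)` if `y_t = j`
and `p_t(j)` otherwise. Summed over `j` this is `1 - 2 p_t(y_t) ≥ 1/3`, so for some `j` the total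
regret against `h_j` is at least `T/9`.
-/

open Finset

namespace PMF

variable {α : Type*} [Fintype α]

theorem sum_toReal (q : PMF α) : ∑ a, (q a).toReal = 1 := by
  rw [← ENNReal.toReal_sum fun a _ => q.apply_ne_top a, ← tsum_fintype (L := .unconditional _),
    q.tsum_coe, ENNReal.toReal_one]

variable [Nonempty α]

noncomputable def leastLikely (q : PMF α) : α :=
  (exists_min_image univ (fun a => (q a).toReal) univ_nonempty).choose

theorem toReal_leastLikely_le (q : PMF α) (a : α) :
    (q q.leastLikely).toReal ≤ (q a).toReal :=
  (exists_min_image univ (fun a => (q a).toReal) univ_nonempty).choose_spec.2 a (mem_univ a)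

theorem toReal_leastLikely_le_inv_card (q : PMF α) :
    (q q.leastLikely).toReal ≤ (Fintype.card α : ℝ)⁻¹ := by
  have h := card_nsmul_le_sum univ _ _ fun a _ => q.toReal_leastLikely_le a
  rw [q.sum_toReal, card_univ, nsmul_eq_mul] at h
  rw [← one_div, le_div_iff₀ (by positivity)]
  linarith

end PMF

variable {α : Type*}

section Adversary

variable [Fintype α] [Nonempty α]

noncomputable def leastLikelyHist (A : List (Unit × α) → Unit → PMF α) : ℕ → List (Unit × α)
  | 0 => []
  | t + 1 => leastLikelyHist A t ++ [((), (A (leastLikelyHist A t) ()).leastLikely)]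

noncomputable def leastLikelyLabel (A : List (Unit × α) → Unit → PMF α) (t : ℕ) : α :=
  (A (leastLikelyHist A t) ()).leastLikely

theorem leastLikelyHist_eq_ofFn (A : List (Unit × α) → Unit → PMF α) (t : ℕ) :
    leastLikelyHist A t = List.ofFn fun i : Fin t => ((), leastLikelyLabel A i) := by
  induction t with
  | zero => rfl
  | succ t ih =>
    rw [List.ofFn_succ', List.concat_eq_append]
    exact congrArg (· ++ _) ih

theorem histU_leastLikelyLabel (A : List (Unit × Fin 3) → Unit → PMF (Fin 3)) {T : ℕ}
    (t : Fin T) : histU (fun s : Fin T => leastLikelyLabel A s) t = leastLikelyHist A t := by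
  rw [leastLikelyHist_eq_ofFn]
  rfl

end Adversary

section Regret

variable [DecidableEq α]

def adversarySet (j a : α) : Set α := if a = j then {j} else {j}ᶜ

theorem mem_adversarySet (j a : α) : a ∈ adversarySet j a := by
  by_cases h : a = j <;> simp [adversarySet, h]

variable [Fintype α] {ι : Type*} [Fintype ι]

theorem sum_ite_eq_neg_self (q : α → ℝ) (a : α) :
    ∑ j, (if a = j then -q j else q j) = ∑ j, q j - 2 * q a := by
  have h : ∀ j, (if a = j then -q j else q j) = q j - 2 * if a = j then q j else 0 := by
    intro j; split_ifs <;> ring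
  simp only [h, sum_sub_distrib, ← mul_sum, sum_ite_eq, mem_univ, if_true]

theorem exists_le_sum_ite_eq_neg [Nonempty α] (p : ι → α → ℝ) (y : ι → α)
    (hp : ∀ t, ∑ j, p t j = 1) (hy : ∀ t, p t (y t) ≤ (Fintype.card α : ℝ)⁻¹) :
    ∃ j, (Fintype.card ι : ℝ) * (1 - 2 / Fintype.card α) / Fintype.card α ≤
      ∑ t, if y t = j then -p t j else p t j := by
  have hα : (0 : ℝ) < Fintype.card α := by exact_mod_cast Fintype.card_pos
  obtain ⟨j, -, hj⟩ := exists_le_of_sum_le (f := fun _ : α =>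
      (Fintype.card ι : ℝ) * (1 - 2 / Fintype.card α) / Fintype.card α) univ_nonempty <| by
    calc ∑ _j : α, (Fintype.card ι : ℝ) * (1 - 2 / Fintype.card α) / Fintype.card α
        = ∑ _t : ι, (1 - 2 * (Fintype.card α : ℝ)⁻¹) := by
          rw [sum_const, sum_const, card_univ, card_univ, nsmul_eq_mul, nsmul_eq_mul]
          field_simp
      _ ≤ ∑ t, ∑ j, (if y t = j then -p t j else p t j) := by
          refine sum_le_sum fun t _ => ?_
          rw [sum_ite_eq_neg_self, hp]
          linarith [hy t]
      _ = ∑ j, ∑ t, (if y t = j then -p t j else p t j) := sum_comm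
  exact ⟨j, hj⟩

open scoped Classical in
theorem regret_adversarySet (q : α → ℝ) (hq : ∑ r, q r = 1) (j a : α) :
    (∑ r, if r ∉ adversarySet j a then q r else 0) -
      (if adversarySet j a ≠ {j}ᶜ then (1 : ℝ) else 0) = if a = j then -q j else q j := by
  by_cases h : a = j
  · have hne : ({j} : Set α) ≠ {j}ᶜ := fun e =>
      Set.mem_compl_singleton_iff.mp (e ▸ Set.mem_singleton j) rfl
    have hloss : ∑ r, (if r = j then 0 else q r) = 1 - q j := by
      rw [← hq, ← sum_erase_eq_sub (mem_univ j), ← filter_ne', sum_filter]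
      simp only [ne_eq, ite_not]
    simp [adversarySet, h, hne, hloss]
  · simp [adversarySet, h]

end Regret

theorem min_min_le_compl (f : Set (Fin 3) → ℝ) (j : Fin 3) :
    min (min (f {1, 2}) (f {0, 2})) (f {0, 1}) ≤ f {j}ᶜ := by
  obtain rfl | rfl | rfl : j = 0 ∨ j = 1 ∨ j = 2 := by omega
  · rw [show ({0}ᶜ : Set (Fin 3)) = {1, 2} by ext x; fin_cases x <;> simp]
    exact (min_le_left _ _).trans (min_le_left _ _)
  · rw [show ({1}ᶜ : Set (Fin 3)) = {0, 2} by ext x; fin_cases x <;> simp]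
    exact (min_le_left _ _).trans (min_le_right _ _)
  · rw [show ({2}ᶜ : Set (Fin 3)) = {0, 1} by ext x; fin_cases x <;> simp]
    exact min_le_right _ _

open scoped Classical in
/-- Any randomized mistake-unknown learner suffers regret at least T/9 on H₃, where
H₃ consists of the three hypotheses with value sets {1,2}, {0,2}, {0,1} ⊆ Fin 3. -/
theorem stmt11 (A : List (Unit × Fin 3) → Unit → PMF (Fin 3)) (T : ℕ) :
    ∃ (y : Fin T → Fin 3) (S : Fin T → Set (Fin 3)), (∀ t, y t ∈ S t) ∧
      (T : ℝ) / 9 ≤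
        (∑ t : Fin T, ∑ r : Fin 3,
            if r ∉ S t then ((A (histU y t) ()) r).toReal else 0)
        - min (min
            (∑ t : Fin T, if S t ≠ ({1, 2} : Set (Fin 3)) then (1 : ℝ) else 0)
            (∑ t : Fin T, if S t ≠ ({0, 2} : Set (Fin 3)) then (1 : ℝ) else 0))
            (∑ t : Fin T, if S t ≠ ({0, 1} : Set (Fin 3)) then (1 : ℝ) else 0) := by
  set y : Fin T → Fin 3 := fun t => leastLikelyLabel A t
  set p : Fin T → Fin 3 → ℝ := fun t r => ((A (histU y t) ()) r).toReal
  have hp : ∀ t, ∑ r, p t r = 1 := fun t => PMF.sum_toReal _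
  have hy : ∀ t, p t (y t) ≤ (Fintype.card (Fin 3) : ℝ)⁻¹ := fun t => by
    simp only [p, y, histU_leastLikelyLabel]
    exact PMF.toReal_leastLikely_le_inv_card _
  obtain ⟨j, hj⟩ := exists_le_sum_ite_eq_neg p y hp hy
  refine ⟨y, fun t => adversarySet j (y t), fun t => mem_adversarySet j (y t), ?_⟩
  calc (T : ℝ) / 9
      = (Fintype.card (Fin T) : ℝ) * (1 - 2 / Fintype.card (Fin 3)) / Fintype.card (Fin 3) := by
        norm_num; ring
    _ ≤ ∑ t, if y t = j then -p t j else p t j := hj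
    _ = ∑ t, ((∑ r, if r ∉ adversarySet j (y t) then p t r else 0) -
          if adversarySet j (y t) ≠ {j}ᶜ then 1 else 0) := by
        simp only [regret_adversarySet _ (hp _)]
    _ = _ := sum_sub_distrib ..
    _ ≤ _ := sub_le_sub_left
        (min_min_le_compl (fun s => ∑ t, if adversarySet j (y t) ≠ s then 1 else 0) j) _
end

section
/- Under the hypotheses of the constant-regret theorem (for all h, h' ∈ H and x ∈ X: 2·|h'(x)\h(x)| ≤ |h(x)|), the per-round potential of the Set-Valued Weighted Majority Algorithm is a supermartingale: E[W^{(t+1)} | w^{(t)}] ≤ W^{(t)}, where W^{(t)} = ∑_{h ∈ H} w^{(t)}(h). -/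
/-!
Let `A` be the weight of the hypotheses predicting exactly `S` and `B` that of the others. The
new total weight is `A + B / 2` after a correct prediction and `2A + B` after a mistake, so with
`C` and `M` the vote mass on `S` and off `S`, the claim reduces to `2MA ≤ CB`. This is trivial
when `A = 0`; otherwise some hypothesis predicts `S`, the condition gives `2|h(x) \ S| ≤ |S|`
for every hypothesis, whence `2M ≤ |S| B`, while `|S| A ≤ C` by counting.
-/

open Finset

section

variable {ι Y : Type*} [Fintype ι] [DecidableEq Y]

theorem sum_sum_ite_mem_eq_sum_card_inter_mul {R : Type*} [NonAssocSemiring R]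
    (s : ι → Finset Y) (w : ι → R) (T : Finset Y) :
    ∑ y ∈ T, ∑ i, (if y ∈ s i then w i else 0) = ∑ i, (#(s i ∩ T) : R) * w i := by
  rw [sum_comm]
  refine sum_congr rfl fun i _ => ?_
  rw [sum_ite_mem, sum_const, inter_comm, nsmul_eq_mul]

theorem sum_ite_update_eq {K : Type*} [DivisionSemiring K] (s : ι → Finset Y) (w : ι → K)
    (S : Finset Y) (y : Y) :
    (∑ i, if y ∉ S then (if s i = S then 2 * w i else w i)
        else (if s i = S then w i else w i / 2)) =
      if y ∈ S then ∑ i with s i = S, w i + (∑ i with s i ≠ S, w i) / 2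
      else 2 * ∑ i with s i = S, w i + ∑ i with s i ≠ S, w i := by
  by_cases hy : y ∈ S <;> simp [hy, sum_ite, mul_sum, sum_div]

variable {K : Type*} [Field K] [LinearOrder K] [IsStrictOrderedRing K]

theorem card_mul_sum_filter_eq_le (s : ι → Finset Y) {w : ι → K} (hw : ∀ i, 0 ≤ w i)
    (S : Finset Y) : #S * ∑ i with s i = S, w i ≤ ∑ i, (#(s i ∩ S) : K) * w i := by
  rw [mul_sum, sum_filter]
  refine sum_le_sum fun i _ => ?_
  by_cases hi : s i = S
  · simp [hi]
  · simpa [hi] using mul_nonneg (Nat.cast_nonneg _) (hw i)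

theorem two_mul_sum_card_sdiff_mul_le (s : ι → Finset Y) {w : ι → K} (hw : ∀ i, 0 ≤ w i)
    {S : Finset Y} (hS : ∀ i, 2 * #(s i \ S) ≤ #S) :
    2 * ∑ i, (#(s i \ S) : K) * w i ≤ #S * ∑ i with s i ≠ S, w i := by
  rw [mul_sum, mul_sum, sum_filter]
  refine sum_le_sum fun i _ => ?_
  by_cases hi : s i = S
  · simp [hi]
  · rw [if_pos hi, ← mul_assoc]
    exact mul_le_mul_of_nonneg_right (by exact_mod_cast hS i) (hw i)

theorem two_mul_sum_card_sdiff_mul_mul_le (s : ι → Finset Y) {w : ι → K} (hw : ∀ i, 0 ≤ w i)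
    (hs : ∀ i j, 2 * #(s j \ s i) ≤ #(s i)) (S : Finset Y) :
    2 * (∑ i, (#(s i \ S) : K) * w i) * ∑ i with s i = S, w i ≤
      (∑ i, (#(s i ∩ S) : K) * w i) * ∑ i with s i ≠ S, w i := by
  have hB : 0 ≤ ∑ i with s i ≠ S, w i := sum_nonneg fun i _ => hw i
  by_cases hS : ∃ i₀, s i₀ = S
  · obtain ⟨i₀, rfl⟩ := hS
    have hA : 0 ≤ ∑ i with s i = s i₀, w i := sum_nonneg fun i _ => hw i
    calc 2 * (∑ i, (#(s i \ s i₀) : K) * w i) * ∑ i with s i = s i₀, w i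
        ≤ #(s i₀) * (∑ i with s i ≠ s i₀, w i) * ∑ i with s i = s i₀, w i :=
          mul_le_mul_of_nonneg_right (two_mul_sum_card_sdiff_mul_le s hw (hs i₀)) hA
      _ = (∑ i with s i ≠ s i₀, w i) * (#(s i₀) * ∑ i with s i = s i₀, w i) := by ring
      _ ≤ (∑ i with s i ≠ s i₀, w i) * ∑ i, (#(s i ∩ s i₀) : K) * w i :=
          mul_le_mul_of_nonneg_left (card_mul_sum_filter_eq_le s hw _) hB
      _ = _ := mul_comm _ _
  · push Not at hS
    rw [filter_false_of_mem fun i _ => hS i, sum_empty, mul_zero]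
    exact mul_nonneg (sum_nonneg fun i _ => mul_nonneg (Nat.cast_nonneg _) (hw i)) hB

theorem sum_div_sum_mul_ite_mem [Fintype Y] (f : Y → K) (S : Finset Y) (a b : K) :
    ∑ y, f y / (∑ y', f y') * (if y ∈ S then a else b) =
      ((∑ y ∈ S, f y) * a + (∑ y ∈ Sᶜ, f y) * b) / (∑ y ∈ S, f y + ∑ y ∈ Sᶜ, f y) := by
  rw [sum_add_sum_compl S f, ← sum_add_sum_compl S, add_div, sum_mul, sum_mul, sum_div, sum_div]
  congr 1 <;> refine sum_congr rfl fun y hy => ?_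
  · rw [if_pos hy]; ring
  · rw [if_neg (mem_compl.1 hy)]; ring

theorem div_add_le_of_two_mul_mul_le {C M A B : K} (hC : 0 ≤ C) (hM : 0 ≤ M)
    (hB : 0 ≤ B) (hA : 0 ≤ A) (h : 2 * M * A ≤ C * B) :
    (C * (A + B / 2) + M * (2 * A + B)) / (C + M) ≤ A + B := by
  rcases (add_nonneg hC hM).eq_or_lt with hCM | hCM
  · rw [← hCM, div_zero]; exact add_nonneg hA hB
  · rw [div_le_iff₀ hCM]; linarith

end

/-- One-step supermartingale property of the Set-Valued Weighted Majority potential: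
the hypothesis class is a finite family `h : ι → X → Finset Y` with nonnegative weights
`w`. Given instance `x` and true set `S`, the algorithm predicts `y` with probability
`v(y)/V`, where `v(y) = ∑_{i : y ∈ h i x} w i` and `V = ∑_y v(y)`. On a mistake
(`y ∉ S`) the weights of hypotheses with `h i x = S` double; otherwise the weights of
hypotheses with `h i x ≠ S` are halved. Under the combinatorial condition
`2|h'(x) \ h(x)| ≤ |h(x)|`, the expected new total weight is at most the old total. -/
theorem stmt15 {X Y ι : Type} [Fintype Y] [DecidableEq Y] [Fintype ι]
    (h : ι → X → Finset Y)
    (hcond : ∀ i j : ι, ∀ x : X, 2 * ((h j x) \ (h i x)).card ≤ (h i x).card)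
    (w : ι → ℝ) (hw : ∀ i, 0 ≤ w i) (x : X) (S : Finset Y) :
    ∑ y : Y,
        ((∑ i : ι, if y ∈ h i x then w i else 0) /
            (∑ y' : Y, ∑ i : ι, if y' ∈ h i x then w i else 0)) *
          (∑ i : ι, if y ∉ S then (if h i x = S then 2 * w i else w i)
            else (if h i x = S then w i else w i / 2))
      ≤ ∑ i : ι, w i := by
  simp only [sum_ite_update_eq (h · x) w S]
  rw [sum_div_sum_mul_ite_mem (fun y => ∑ i, if y ∈ h i x then w i else 0),
    sum_sum_ite_mem_eq_sum_card_inter_mul, sum_sum_ite_mem_eq_sum_card_inter_mul]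
  simp only [← sdiff_eq_inter_compl]
  rw [← sum_filter_add_sum_filter_not univ (h · x = S) w]
  refine div_add_le_of_two_mul_mul_le ?_ ?_ (sum_nonneg fun i _ => hw i)
    (sum_nonneg fun i _ => hw i)
    (two_mul_sum_card_sdiff_mul_mul_le (h · x) hw (fun i j => hcond i j x) S)
  all_goals exact sum_nonneg fun i _ => mul_nonneg (Nat.cast_nonneg _) (hw i)
end
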